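/- Zero Cancellation Theorem, part (ii): Let n ≥ 1 and let x, y be elements of Kiselman's semigroup K_n with x·y = f. If x belongs to the submonoid of K_n generated by {a_1, a_2, …, a_{n-1}}, then y = f. -/

import Mathlib

namespace Kiselman

/-- The defining relations of Kiselman's semigroup on the free monoid over `Fin n`,
where the index `i : Fin n` represents the generator `a_{i+1}` (so letters are 0-based). -/
def Rel (n : ℕ) : FreeMonoid (Fin n) → FreeMonoid (Fin n) → Prop := fun u v =>
  (∃ i : Fin n, u = .of i * .of i ∧ v = .of i) ∨
  (∃ i j : Fin n, j < i ∧
    ((u = .of i * .of j * .of i ∧ v = .of i * .of j) ∨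
     (u = .of j * .of i * .of j ∧ v = .of i * .of j)))

/-- Kiselman's semigroup (monoid) `K n`, presented by the relations `Rel n`. -/
def K (n : ℕ) : Type := (conGen (Rel n)).Quotient

instance (n : ℕ) : Monoid (K n) := inferInstanceAs (Monoid (conGen (Rel n)).Quotient)

/-- The canonical epimorphism `φ` from the free monoid onto `K n`. -/
def phi (n : ℕ) : FreeMonoid (Fin n) →* K n := Con.mk' _

/-- `φ` applied to a word given as a list of (0-based) letters. -/
def phiL (n : ℕ) (w : List (Fin n)) : K n := phi n (FreeMonoid.ofList w)

/-- The generator `a_{i+1}` of `K n` (`i` is the 0-based index). -/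
def gen {n : ℕ} (i : Fin n) : K n := phi n (FreeMonoid.of i)

/-- The word `a_hi a_{hi-1} ⋯ a_lo` (letters named 1-based), as a list of 0-based indices:
`[hi-1, hi-2, …, lo-1]` (capped at `n`). -/
def descList (n lo hi : ℕ) : List (Fin n) :=
  ((List.finRange n).filter (fun k => decide (lo ≤ k.val + 1 ∧ k.val + 1 ≤ hi))).reverse

/-- The zero element `f = a_n a_{n-1} ⋯ a_2 a_1` of `K n`. -/
def fEl (n : ℕ) : K n := phiL n (descList n 1 n)

/-- A word `w` is canonical if for every factorization `w = p ++ [i] ++ u ++ [i] ++ q`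
there are letters `j > i` and `k < i` occurring in `u`. -/
def Canonical {n : ℕ} (w : List (Fin n)) : Prop :=
  ∀ (p u q : List (Fin n)) (i : Fin n),
    w = p ++ [i] ++ u ++ [i] ++ q →
    (∃ j ∈ u, i < j) ∧ (∃ k ∈ u, k < i)

/-- The submonoid of `K n` generated by `{a_2, a_3, …, a_n}`. -/
def upper (n : ℕ) : Submonoid (K n) := Submonoid.closure (gen '' {i : Fin n | i.val ≠ 0})

/-- The submonoid of `K n` generated by `{a_1, a_2, …, a_{n-1}}`. -/
def lower (n : ℕ) : Submonoid (K n) := Submonoid.closure (gen '' {i : Fin n | i.val + 1 ≠ n})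

/-- `m(x) = min { i ∈ {0,…,n} : x ⬝ (a_i a_{i-1} ⋯ a_1) = f }`. -/
noncomputable def mIdx {n : ℕ} (x : K n) : ℕ :=
  sInf {i : ℕ | x * phiL n (descList n 1 i) = fEl n}


section Aux


/-- target constant vector: `cvec n k = n - k`. -/
def cvec (n : ℕ) : Fin n → ℕ := fun k => n - k.val

/-- sup of `v` over coordinates strictly above `i`. -/
def SupA {n : ℕ} (i : Fin n) (v : Fin n → ℕ) : ℕ :=
  (Finset.univ.filter fun k => i < k).sup v

/-- update coordinate `i` to `1 + SupA i v`. -/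
def upd {n : ℕ} (i : Fin n) (v : Fin n → ℕ) : Fin n → ℕ :=
  fun k => if k = i then 1 + SupA i v else v k

/-- action of a word, letters processed left to right. -/
def actW {n : ℕ} (w : List (Fin n)) (v : Fin n → ℕ) : Fin n → ℕ :=
  w.foldl (fun s i => upd i s) v

lemma actW_nil {n : ℕ} (v : Fin n → ℕ) : actW [] v = v := rfl

lemma actW_cons {n : ℕ} (i : Fin n) (w : List (Fin n)) (v : Fin n → ℕ) :
    actW (i :: w) v = actW w (upd i v) := rfl

lemma actW_append {n : ℕ} (w₁ w₂ : List (Fin n)) (v : Fin n → ℕ) :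
    actW (w₁ ++ w₂) v = actW w₂ (actW w₁ v) := List.foldl_append

lemma upd_apply_ne {n : ℕ} (i : Fin n) (v : Fin n → ℕ) {k : Fin n} (h : k ≠ i) :
    upd i v k = v k := by simp [upd, h]

lemma upd_apply_self {n : ℕ} (i : Fin n) (v : Fin n → ℕ) :
    upd i v i = 1 + SupA i v := by simp [upd]

lemma SupA_congr {n : ℕ} (i : Fin n) {v w : Fin n → ℕ}
    (h : ∀ k, i < k → v k = w k) : SupA i v = SupA i w := by
  apply Finset.sup_congr rfl
  intro k hk
  exact h k (by simpa using hk)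

lemma SupA_upd_le {n : ℕ} (i j : Fin n) (v : Fin n → ℕ) (h : j ≤ i) :
    SupA i (upd j v) = SupA i v := by
  apply SupA_congr
  intro k hk
  exact upd_apply_ne j v (by intro e; subst e; exact absurd (lt_of_le_of_lt h hk) (lt_irrefl _))

lemma upd_upd_self {n : ℕ} (i : Fin n) (v : Fin n → ℕ) :
    upd i (upd i v) = upd i v := by
  funext k
  by_cases hk : k = i
  · subst hk
    rw [upd_apply_self, upd_apply_self, SupA_upd_le _ _ _ (le_refl _)]
  · rw [upd_apply_ne _ _ hk, upd_apply_ne _ _ hk]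

/-- relation `a_i a_j a_i = a_i a_j` for `j < i`, semantically (left-to-right action). -/
lemma upd_iji {n : ℕ} {i j : Fin n} (h : j < i) (v : Fin n → ℕ) :
    upd i (upd j (upd i v)) = upd j (upd i v) := by
  funext k
  by_cases hk : k = i
  · subst hk
    rw [upd_apply_self, upd_apply_ne j _ (Fin.ne_of_gt h), upd_apply_self,
      SupA_upd_le _ _ _ (le_of_lt h), SupA_upd_le _ _ _ le_rfl]
  · rw [upd_apply_ne _ _ hk]

/-- relation `a_j a_i a_j = a_i a_j` for `j < i`, semantically. -/
lemma upd_jij {n : ℕ} {i j : Fin n} (h : j < i) (v : Fin n → ℕ) :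
    upd j (upd i (upd j v)) = upd j (upd i v) := by
  have hne : i ≠ j := Fin.ne_of_gt h
  funext k
  by_cases hk : k = j
  · subst hk
    rw [upd_apply_self, upd_apply_self]
    congr 1
    apply SupA_congr
    intro m hm
    by_cases hmi : m = i
    · subst hmi
      rw [upd_apply_self, upd_apply_self, SupA_upd_le _ _ _ (le_of_lt h)]
    · rw [upd_apply_ne _ _ hmi, upd_apply_ne _ _ hmi,
        upd_apply_ne _ _ (by intro e; subst e; exact absurd hm (lt_irrefl _))]
  · by_cases hki : k = i
    · subst hki
      rw [upd_apply_ne _ _ hk, upd_apply_self, upd_apply_ne _ _ hk, upd_apply_self,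
        SupA_upd_le _ _ _ (le_of_lt h)]
    · rw [upd_apply_ne _ _ hk, upd_apply_ne _ _ hki, upd_apply_ne _ _ hk,
        upd_apply_ne _ _ hk, upd_apply_ne _ _ hki]

lemma upd_mono {n : ℕ} (i : Fin n) {v w : Fin n → ℕ} (h : ∀ k, v k ≤ w k) :
    ∀ k, upd i v k ≤ upd i w k := by
  intro k
  by_cases hk : k = i
  · subst hk
    rw [upd_apply_self, upd_apply_self]
    exact Nat.add_le_add_left (Finset.sup_mono_fun fun k _ => h k) 1
  · rw [upd_apply_ne _ _ hk, upd_apply_ne _ _ hk]; exact h k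

lemma actW_mono {n : ℕ} (w : List (Fin n)) {v v' : Fin n → ℕ} (h : ∀ k, v k ≤ v' k) :
    ∀ k, actW w v k ≤ actW w v' k := by
  induction w generalizing v v' with
  | nil => exact h
  | cons i w ih => exact ih (upd_mono i h)

lemma SupA_cvec {n : ℕ} (i : Fin n) : SupA i (cvec n) = n - (i.val + 1) := by
  apply le_antisymm
  · apply Finset.sup_le
    intro k hk
    have hik : i < k := by simpa using hk
    show n - k.val ≤ n - (i.val + 1)
    have : i.val + 1 ≤ k.val := hik
    omega
  · by_cases h : i.val + 1 < n
    · have hmem : (⟨i.val + 1, h⟩ : Fin n) ∈ Finset.univ.filter fun k => i < k :=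
        Finset.mem_filter.mpr ⟨Finset.mem_univ _, by rw [Fin.lt_def]; exact Nat.lt_succ_self _⟩
      have := Finset.le_sup (f := cvec n) hmem
      exact le_trans (le_of_eq rfl) this
    · have h0 : n - (i.val + 1) = 0 := Nat.sub_eq_zero_of_le (le_of_not_gt h)
      rw [h0]; exact Nat.zero_le _

lemma upd_cvec {n : ℕ} (i : Fin n) : upd i (cvec n) = cvec n := by
  funext k
  by_cases hk : k = i
  · subst hk
    rw [upd_apply_self, SupA_cvec]
    show 1 + (n - (k.val + 1)) = n - k.val
    have := k.isLt
    omega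
  · rw [upd_apply_ne _ _ hk]

lemma actW_cvec {n : ℕ} (w : List (Fin n)) : actW w (cvec n) = cvec n := by
  induction w with
  | nil => rfl
  | cons i w ih => rw [actW_cons, upd_cvec, ih]


-- Part 2: congruence invariance of actW, phiL algebra, generator relations

lemma toList_of_mul_of {n : ℕ} (i j : Fin n) :
    FreeMonoid.toList (FreeMonoid.of i * FreeMonoid.of j) = [i, j] := rfl

lemma actW_invariant {n : ℕ} {a b : FreeMonoid (Fin n)} (h : conGen (Rel n) a b) :
    actW (FreeMonoid.toList a) = actW (FreeMonoid.toList b) := by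
  induction h with
  | of a b hab =>
    funext v
    rcases hab with ⟨i, rfl, rfl⟩ | ⟨i, j, hij, ⟨rfl, rfl⟩ | ⟨rfl, rfl⟩⟩
    · show actW [i, i] v = actW [i] v
      show upd i (upd i v) = upd i v
      exact upd_upd_self i v
    · show upd i (upd j (upd i v)) = upd j (upd i v)
      exact upd_iji hij v
    · show upd j (upd i (upd j v)) = upd j (upd i v)
      exact upd_jij hij v
  | refl a => rfl
  | symm _ ih => exact ih.symm
  | trans _ _ ih₁ ih₂ => exact ih₁.trans ih₂
  | mul h₁ h₂ ih₁ ih₂ =>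
    funext v
    show actW (FreeMonoid.toList (_ * _)) v = actW (FreeMonoid.toList (_ * _)) v
    rw [FreeMonoid.toList_mul, FreeMonoid.toList_mul, actW_append, actW_append, ih₁, ih₂]

lemma actW_of_phiL_eq {n : ℕ} {w₁ w₂ : List (Fin n)} (h : phiL n w₁ = phiL n w₂) :
    actW w₁ = actW w₂ := by
  have h' : conGen (Rel n) (FreeMonoid.ofList w₁) (FreeMonoid.ofList w₂) :=
    (Con.eq _).mp h
  simpa [FreeMonoid.toList_ofList] using actW_invariant h'

lemma phiL_nil (n : ℕ) : phiL n [] = 1 := rfl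

lemma phiL_append {n : ℕ} (w₁ w₂ : List (Fin n)) :
    phiL n (w₁ ++ w₂) = phiL n w₁ * phiL n w₂ := by
  unfold phiL
  rw [← map_mul]
  rfl

lemma phiL_cons {n : ℕ} (i : Fin n) (w : List (Fin n)) :
    phiL n (i :: w) = gen i * phiL n w := by
  have : (i :: w) = [i] ++ w := rfl
  rw [this, phiL_append]
  rfl

lemma phiL_singleton {n : ℕ} (i : Fin n) : phiL n [i] = gen i := rfl

/-- `a_i a_i = a_i` in `K n`. -/
lemma gen_sq {n : ℕ} (i : Fin n) : gen i * gen i = gen i := by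
  show phi n (FreeMonoid.of i) * phi n (FreeMonoid.of i) = phi n (FreeMonoid.of i)
  simp only [← map_mul]
  exact (Con.eq _).mpr (ConGen.Rel.of _ _ (Or.inl ⟨i, rfl, rfl⟩))

/-- `a_i a_j a_i = a_i a_j` for `j < i` in `K n`. -/
lemma gen_iji {n : ℕ} {i j : Fin n} (h : j < i) :
    gen i * gen j * gen i = gen i * gen j := by
  show phi n (FreeMonoid.of i) * phi n (FreeMonoid.of j) * phi n (FreeMonoid.of i)
      = phi n (FreeMonoid.of i) * phi n (FreeMonoid.of j)
  simp only [← map_mul]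
  exact (Con.eq _).mpr (ConGen.Rel.of _ _ (Or.inr ⟨i, j, h, Or.inl ⟨rfl, rfl⟩⟩))

/-- `a_j a_i a_j = a_i a_j` for `j < i` in `K n`. -/
lemma gen_jij {n : ℕ} {i j : Fin n} (h : j < i) :
    gen j * gen i * gen j = gen i * gen j := by
  show phi n (FreeMonoid.of j) * phi n (FreeMonoid.of i) * phi n (FreeMonoid.of j)
      = phi n (FreeMonoid.of i) * phi n (FreeMonoid.of j)
  simp only [← map_mul]
  exact (Con.eq _).mpr (ConGen.Rel.of _ _ (Or.inr ⟨i, j, h, Or.inr ⟨rfl, rfl⟩⟩))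

/-- strengthened R1: if all letters of `u` exceed `i` then `a_i` is absorbed by `u ++ [i]`. -/
lemma absorb_left {n : ℕ} (i : Fin n) :
    ∀ u : List (Fin n), (∀ k ∈ u, i < k) → gen i * phiL n (u ++ [i]) = phiL n (u ++ [i]) := by
  intro u
  induction u with
  | nil =>
    intro _
    show gen i * phiL n [i] = phiL n [i]
    rw [phiL_singleton, gen_sq]
  | cons k u ih =>
    intro hu
    have hk : i < k := hu k (List.mem_cons_self)
    have ih' := ih fun m hm => hu m (List.mem_cons_of_mem _ hm)
    have key : ∀ X : K n, gen i * (gen k * (gen i * X)) = gen k * (gen i * X) := by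
      intro X
      have h2 := congrArg (· * X) (gen_jij hk)
      simpa [mul_assoc] using h2
    calc gen i * phiL n ((k :: u) ++ [i])
        = gen i * (gen k * phiL n (u ++ [i])) := by rw [List.cons_append, phiL_cons]
      _ = gen i * (gen k * (gen i * phiL n (u ++ [i]))) := by rw [ih']
      _ = gen k * (gen i * phiL n (u ++ [i])) := key _
      _ = gen k * phiL n (u ++ [i]) := by rw [ih']
      _ = phiL n ((k :: u) ++ [i]) := by rw [List.cons_append, phiL_cons]

/-- strengthened R2: if all letters of `u` are below `i` then a trailing `a_i` is absorbed. -/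
lemma absorb_right {n : ℕ} (i : Fin n) :
    ∀ u : List (Fin n), (∀ k ∈ u, k < i) → gen i * phiL n u * gen i = gen i * phiL n u := by
  intro u
  induction u with
  | nil => simp [phiL_nil, gen_sq]
  | cons j u ih =>
    intro hu
    have hj : j < i := hu j (List.mem_cons_self)
    have ih' := ih fun m hm => hu m (List.mem_cons_of_mem _ hm)
    have ih'' : gen i * (phiL n u * gen i) = gen i * phiL n u := by
      rw [← mul_assoc]; exact ih'
    have e1 : ∀ X : K n, gen i * (gen j * X) = gen i * (gen j * (gen i * X)) := by
      intro X
      have h2 := congrArg (· * X) (gen_iji hj).symm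
      simpa [mul_assoc] using h2
    show gen i * phiL n (j :: u) * gen i = gen i * phiL n (j :: u)
    rw [phiL_cons]
    rw [mul_assoc, mul_assoc]
    calc gen i * (gen j * (phiL n u * gen i))
        = gen i * (gen j * (gen i * (phiL n u * gen i))) := e1 _
      _ = gen i * (gen j * (gen i * phiL n u)) := by rw [ih'']
      _ = gen i * (gen j * phiL n u) := (e1 _).symm

-- Part 3: descending words and the key combinatorial lemma

/-- `descL n lo hi = [hi-1, hi-2, …, lo]` as elements of `Fin n`. -/
def descL (n lo : ℕ) : ℕ → List (Fin n)
  | 0 => []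
  | hi+1 => if h : lo ≤ hi ∧ hi < n then (⟨hi, h.2⟩ : Fin n) :: descL n lo hi else []

lemma descL_succ_def {n lo hi : ℕ} :
    descL n lo (hi+1) = if h : lo ≤ hi ∧ hi < n then (⟨hi, h.2⟩ : Fin n) :: descL n lo hi else [] :=
  rfl

lemma descL_of_le {n lo hi : ℕ} (h : hi ≤ lo) : descL n lo hi = [] := by
  cases hi with
  | zero => rfl
  | succ m =>
    rw [descL_succ_def, dif_neg]
    intro ⟨h1, _⟩
    omega

lemma descL_succ {n lo hi : ℕ} (h1 : lo ≤ hi) (h2 : hi < n) :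
    descL n lo (hi+1) = (⟨hi, h2⟩ : Fin n) :: descL n lo hi := by
  rw [descL_succ_def, dif_pos ⟨h1, h2⟩]

lemma mem_descL {n lo : ℕ} : ∀ {hi : ℕ} {l : Fin n}, l ∈ descL n lo hi → lo ≤ l.val ∧ l.val < hi := by
  intro hi
  induction hi with
  | zero => intro l h; simp [descL] at h
  | succ m ih =>
    intro l h
    rw [descL_succ_def] at h
    by_cases hc : lo ≤ m ∧ m < n
    · rw [dif_pos hc] at h
      rcases List.mem_cons.mp h with h | h
      · subst h; exact ⟨hc.1, Nat.lt_succ_self m⟩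
      · have := ih h; omega
    · rw [dif_neg hc] at h; simp at h

lemma descL_split {n lo : ℕ} : ∀ {hi : ℕ} (i : Fin n), lo ≤ i.val → i.val < hi → hi ≤ n →
    descL n lo hi = descL n (i.val+1) hi ++ i :: descL n lo i.val := by
  intro hi
  induction hi with
  | zero => intro i _ h; omega
  | succ m ih =>
    intro i hlo hhi hn
    have hmn : m < n := by omega
    by_cases he : i.val = m
    · have : i = (⟨m, hmn⟩ : Fin n) := Fin.ext he
      subst this
      rw [descL_succ hlo hmn, descL_of_le (le_refl _)]
      rfl
    · have him : i.val < m := by omega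
      have e1 : descL n lo (m+1) = (⟨m, hmn⟩ : Fin n) :: descL n lo m :=
        descL_succ (by omega) hmn
      have e2 : descL n (i.val+1) (m+1) = (⟨m, hmn⟩ : Fin n) :: descL n (i.val+1) m :=
        descL_succ (by omega) hmn
      rw [e1, e2, ih i hlo him (by omega)]
      rfl

lemma canonical_tail {n : ℕ} {a : Fin n} {w : List (Fin n)}
    (h : Canonical (a :: w)) : Canonical w := by
  intro p u q i hw
  exact h (a :: p) u q i (by rw [hw]; rfl)

/-- pinned vectors: at least `cvec` everywhere, equal to `cvec` on coordinates `≥ hi`. -/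
def PinC (n hi : ℕ) (v : Fin n → ℕ) : Prop :=
  (∀ k, cvec n k ≤ v k) ∧ ∀ k : Fin n, hi ≤ k.val → v k = cvec n k

/-- The key combinatorial lemma: a canonical word all of whose letters lie in `[lo, hi)`
that acts as the constant `cvec` on pinned vectors must be the descending word. -/
lemma lemmaC {n lo : ℕ} : ∀ (w : List (Fin n)) (hi : ℕ), hi ≤ n →
    (∀ l ∈ w, lo ≤ l.val ∧ l.val < hi) → Canonical w →
    (∀ v, PinC n hi v → ∀ k : Fin n, lo ≤ k.val → actW w v k = cvec n k) →
    w = descL n lo hi := by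
  intro w
  induction w with
  | nil =>
    intro hi hin _ _ hgood
    have hle : hi ≤ lo := by
      by_contra hlt
      push_neg at hlt
      have hlon : lo < n := lt_of_lt_of_le hlt hin
      set k0 : Fin n := ⟨lo, hlon⟩
      set v : Fin n → ℕ := Function.update (cvec n) k0 (cvec n k0 + 1) with hv
      have hpin : PinC n hi v := by
        constructor
        · intro k
          by_cases hk : k = k0
          · subst hk; simp [hv, Function.update_self]
          · simp [hv, Function.update_of_ne hk]
        · intro k hk
          have : k ≠ k0 := by
            intro e; subst e; simp only [k0] at hk; omega
          simp [hv, Function.update_of_ne this]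
      have := hgood v hpin k0 (le_refl _)
      rw [actW_nil] at this
      simp [hv, Function.update_self] at this
    exact (descL_of_le hle).symm
  | cons i0 w' ih =>
    intro hi hin hlet hC hgood
    obtain ⟨hlo, hhi⟩ := hlet i0 (List.mem_cons_self)
    by_cases htop : i0.val + 1 = hi
    · -- case A : i0 is the top of the interval
      have hw'let : ∀ l ∈ w', lo ≤ l.val ∧ l.val < i0.val := by
        intro l hl
        obtain ⟨h1, h2⟩ := hlet l (List.mem_cons_of_mem _ hl)
        refine ⟨h1, ?_⟩
        rcases Nat.lt_or_ge l.val i0.val with h | h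
        · exact h
        · exfalso
          have : l = i0 := Fin.ext (by omega)
          subst this
          obtain ⟨u, q, huq⟩ := List.append_of_mem hl
          have hfac : (l :: w') = [] ++ [l] ++ u ++ [l] ++ q := by
            rw [huq]; simp
          obtain ⟨⟨j, hj, hij⟩, -⟩ := hC [] u q l hfac
          have hjmem : j ∈ l :: w' := by
            rw [huq]
            exact List.mem_cons_of_mem _ (List.mem_append.mpr (Or.inl hj))
          have hj2 := (hlet j hjmem).2
          have hj3 : l.val < j.val := hij
          omega
      have hsem : ∀ v, PinC n i0.val v → ∀ k : Fin n, lo ≤ k.val → actW w' v k = cvec n k := by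
        intro v hpin k hk
        have hfix : upd i0 v = v := by
          funext m
          by_cases hm : m = i0
          · rw [hm, upd_apply_self]
            have hS : SupA i0 v = SupA i0 (cvec n) := by
              apply SupA_congr
              intro k' hk'
              have hk'2 : i0.val < k'.val := hk'
              exact hpin.2 k' (by omega)
            rw [hS, SupA_cvec, hpin.2 i0 (le_refl _)]
            show 1 + (n - (i0.val + 1)) = cvec n i0
            have := i0.isLt
            unfold cvec
            omega
          · exact upd_apply_ne _ _ hm
        have hpin' : PinC n hi v := ⟨hpin.1, fun k' hk' => hpin.2 k' (by omega)⟩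
        have := hgood v hpin' k hk
        rw [← this, actW_cons, hfix]
      have hw' : w' = descL n lo i0.val :=
        ih i0.val (le_of_lt i0.isLt) hw'let (canonical_tail hC) hsem
      have hcons : descL n lo hi = i0 :: descL n lo i0.val := by
        conv_lhs => rw [← htop]
        rw [descL_succ hlo i0.isLt, Fin.eta]
      rw [hcons, hw']
    · -- case B : i0 is strictly below the top; derive a contradiction
      exfalso
      have hB : i0.val + 1 < hi := by omega
      set j0 : Fin n := ⟨i0.val + 1, by omega⟩ with hj0
      have hsem : ∀ v, PinC n hi v → ∀ k : Fin n, lo ≤ k.val → actW w' v k = cvec n k := by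
        intro v hpin k hk
        -- lower bound
        have hlow : cvec n k ≤ actW w' v k := by
          have h1 := actW_mono w' hpin.1 k
          rw [actW_cvec] at h1
          exact h1
        -- upper bound
        set v0 : Fin n → ℕ := Function.update v j0 (v i0 + v j0 + 1) with hv0
        have hpin0 : PinC n hi v0 := by
          constructor
          · intro m
            by_cases hm : m = j0
            · rw [hm, hv0, Function.update_self]
              have h9 := hpin.1 j0
              omega
            · rw [hv0, Function.update_of_ne hm]; exact hpin.1 m
          · intro m hm
            have hmne : m ≠ j0 := by
              intro e
              rw [e] at hm
              simp only [hj0] at hm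
              omega
            rw [hv0, Function.update_of_ne hmne]
            exact hpin.2 m hm
        have hge : ∀ m, v m ≤ upd i0 v0 m := by
          intro m
          by_cases hm : m = i0
          · subst hm
            rw [upd_apply_self]
            have hj0mem : j0 ∈ Finset.univ.filter fun k' => m < k' := by
              refine Finset.mem_filter.mpr ⟨Finset.mem_univ _, ?_⟩
              rw [Fin.lt_def]
              simp only [hj0]
              omega
            have h1 : v0 j0 ≤ SupA m v0 := Finset.le_sup hj0mem
            have h2 : v0 j0 = v m + v j0 + 1 := by rw [hv0, Function.update_self]
            omega
          · rw [upd_apply_ne _ _ hm]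
            by_cases hm2 : m = j0
            · subst hm2
              rw [hv0, Function.update_self]
              omega
            · rw [hv0, Function.update_of_ne hm2]
        have hhigh : actW w' v k ≤ cvec n k := by
          have h1 := actW_mono w' hge k
          have h2 := hgood v0 hpin0 k hk
          rw [actW_cons] at h2
          rw [h2] at h1
          exact h1
        exact le_antisymm hhigh hlow
      have hw' : w' = descL n lo hi := ih hi hin
        (fun l hl => hlet l (List.mem_cons_of_mem _ hl)) (canonical_tail hC) hsem
      -- now i0 appears in descL n lo hi, giving a canonicity violation
      have hsplit : descL n lo hi = descL n (i0.val+1) hi ++ i0 :: descL n lo i0.val :=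
        descL_split i0 hlo hhi hin
      have hfac : (i0 :: w') = [] ++ [i0] ++ descL n (i0.val+1) hi ++ [i0] ++ descL n lo i0.val := by
        rw [hw', hsplit]; simp
      obtain ⟨-, ⟨m, hm, hmi⟩⟩ := hC [] _ _ i0 hfac
      have hm1 := (mem_descL hm).1
      have hm2 : m.val < i0.val := hmi
      omega

-- Part 4: Good words, reduction of non-canonical words, final assembly

def GoodW (n : ℕ) (w : List (Fin n)) : Prop :=
  ∀ v, (∀ k, cvec n k ≤ v k) → actW w v = cvec n

/-- `descL n 0 n` coincides with the official `descList n 1 n`. -/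
lemma descList_eq_descL (n : ℕ) : descList n 1 n = descL n 0 n := by
  have h1 : descList n 1 n = (List.finRange n).reverse := by
    unfold descList
    congr 1
    apply List.filter_eq_self.mpr
    intro a _
    have := a.isLt
    simp
  rw [h1]
  have h2 : ∀ hi : ℕ, hi ≤ n → descL n 0 hi = ((List.finRange n).take hi).reverse := by
    intro hi
    induction hi with
    | zero =>
      intro _
      simp only [List.take_zero, List.reverse_nil]
      rfl
    | succ m ih =>
      intro hm
      have hmn : m < n := hm
      rw [descL_succ (Nat.zero_le _) hmn, ih (le_of_lt hmn)]
      rw [List.take_succ]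
      have : (List.finRange n)[m]? = some ⟨m, hmn⟩ := by
        rw [List.getElem?_eq_getElem (by simpa using hmn)]
        simp
      rw [this]
      simp
  rw [h2 n le_rfl, List.take_of_length_le (by simp)]

lemma fEl_eq_descL (n : ℕ) : fEl n = phiL n (descL n 0 n) := by
  rw [fEl, descList_eq_descL]

/-- The full descending word sends everything with correct pins to `cvec`. -/
lemma actW_descL (n : ℕ) : ∀ (hi : ℕ), hi ≤ n → ∀ v : Fin n → ℕ,
    (∀ k : Fin n, hi ≤ k.val → v k = cvec n k) → actW (descL n 0 hi) v = cvec n := by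
  intro hi
  induction hi with
  | zero =>
    intro _ v hv
    funext k
    exact hv k (Nat.zero_le _)
  | succ m ih =>
    intro hm v hv
    have hmn : m < n := hm
    rw [descL_succ (Nat.zero_le _) hmn, actW_cons]
    apply ih (le_of_lt hmn)
    intro k hk
    by_cases hkm : k = (⟨m, hmn⟩ : Fin n)
    · rw [hkm, upd_apply_self]
      have hS : SupA (⟨m, hmn⟩ : Fin n) v = SupA (⟨m, hmn⟩ : Fin n) (cvec n) := by
        apply SupA_congr
        intro k' hk'
        have : m < k'.val := hk'
        exact hv k' (by omega)
      rw [hS, SupA_cvec]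
      show 1 + (n - (m + 1)) = cvec n ⟨m, hmn⟩
      unfold cvec
      simp
      omega
    · rw [upd_apply_ne _ _ hkm]
      apply hv
      have : k.val ≠ m := fun e => hkm (Fin.ext e)
      omega

lemma goodW_descL (n : ℕ) : GoodW n (descL n 0 n) := by
  intro v _
  exact actW_descL n n le_rfl v (fun k hk => absurd k.isLt (by omega))

/-- top-free letters fix the shifted vector `cvec + M`. -/
lemma actW_fix_shift {n : ℕ} (M : ℕ) :
    ∀ (u : List (Fin n)), (∀ i ∈ u, i.val + 1 ≠ n) →
    actW u (fun k => cvec n k + M) = fun k => cvec n k + M := by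
  intro u
  induction u with
  | nil => intro _; rfl
  | cons i u ih =>
    intro hu
    have hi : i.val + 1 < n := by
      have h1 := hu i (List.mem_cons_self)
      have := i.isLt
      omega
    have hfix : upd i (fun k => cvec n k + M) = fun k => cvec n k + M := by
      funext k
      by_cases hk : k = i
      · rw [hk, upd_apply_self]
        have hS : SupA i (fun k => cvec n k + M) = n - (i.val + 1) + M := by
          apply le_antisymm
          · apply Finset.sup_le
            intro m hm
            have him : i < m := by simpa using hm
            have h2 : i.val < m.val := him
            show n - m.val + M ≤ n - (i.val + 1) + M
            omega
          · have hmem : (⟨i.val + 1, hi⟩ : Fin n) ∈ Finset.univ.filter fun m => i < m :=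
              Finset.mem_filter.mpr ⟨Finset.mem_univ _, by
                rw [Fin.lt_def]; exact Nat.lt_succ_self _⟩
            exact Finset.le_sup (f := fun k => cvec n k + M) hmem
        rw [hS]
        show 1 + (n - (i.val + 1) + M) = cvec n i + M
        unfold cvec
        omega
      · exact upd_apply_ne _ _ hk
    rw [actW_cons, hfix, ih (fun m hm => hu m (List.mem_cons_of_mem _ hm))]

/-- extraction: a top-free prefix can be cancelled from a Good word. -/
lemma goodW_extract {n : ℕ} {u w : List (Fin n)} (hu : ∀ i ∈ u, i.val + 1 ≠ n)
    (h : GoodW n (u ++ w)) : GoodW n w := by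
  intro v hv
  set M := Finset.univ.sup v with hM
  set V : Fin n → ℕ := fun k => cvec n k + M with hV
  have hVc : ∀ k, cvec n k ≤ V k := fun k => Nat.le_add_right _ _
  have hvV : ∀ k, v k ≤ V k := by
    intro k
    have h1 : v k ≤ M := Finset.le_sup (Finset.mem_univ k)
    have h2 : M ≤ V k := by rw [hV]; exact Nat.le_add_left _ _
    exact le_trans h1 h2
  have hwV : actW w V = cvec n := by
    have h1 : actW (u ++ w) V = cvec n := h V hVc
    rw [actW_append] at h1
    rw [actW_fix_shift M u hu] at h1
    exact h1
  funext k
  apply le_antisymm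
  · have h1 := actW_mono w hvV k
    rw [hwV] at h1
    exact h1
  · have h1 := actW_mono w hv k
    rw [actW_cvec] at h1
    exact h1

/-- refinement, low case: inside `[i] ++ u ++ [i]` with all of `u` at most `i`, find
an inner pair of `i`s with everything strictly below `i` in between. -/
lemma refine_low {n : ℕ} (i : Fin n) : ∀ (N : ℕ) (u : List (Fin n)), u.length ≤ N →
    (∀ k ∈ u, k ≤ i) →
    ∃ p' u' q', [i] ++ u ++ [i] = p' ++ [i] ++ u' ++ [i] ++ q' ∧ ∀ k ∈ u', k < i := by
  intro N
  induction N with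
  | zero =>
    intro u hu hle
    have : u = [] := List.length_eq_zero_iff.mp (le_antisymm hu (Nat.zero_le _))
    subst this
    exact ⟨[], [], [], by simp, by simp⟩
  | succ N ih =>
    intro u hu hle
    by_cases hmem : i ∈ u
    · obtain ⟨u₁, u₂, rfl⟩ := List.append_of_mem hmem
      have hlen : u₁.length ≤ N := by
        have h5 : (u₁ ++ i :: u₂).length = u₁.length + u₂.length + 1 := by simp; omega
        omega
      obtain ⟨p', u', q', heq, hlt⟩ := ih u₁ hlen
        (fun k hk => hle k (List.mem_append.mpr (Or.inl hk)))
      refine ⟨p', u', q' ++ u₂ ++ [i], ?_, hlt⟩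
      have : [i] ++ (u₁ ++ i :: u₂) ++ [i] = ([i] ++ u₁ ++ [i]) ++ (u₂ ++ [i]) := by simp
      rw [this, heq]
      simp
    · refine ⟨[], u, [], by simp, ?_⟩
      intro k hk
      exact lt_of_le_of_ne (hle k hk) (fun e => hmem (e ▸ hk))

/-- refinement, high case. -/
lemma refine_high {n : ℕ} (i : Fin n) : ∀ (N : ℕ) (u : List (Fin n)), u.length ≤ N →
    (∀ k ∈ u, i ≤ k) →
    ∃ p' u' q', [i] ++ u ++ [i] = p' ++ [i] ++ u' ++ [i] ++ q' ∧ ∀ k ∈ u', i < k := by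
  intro N
  induction N with
  | zero =>
    intro u hu hle
    have : u = [] := List.length_eq_zero_iff.mp (le_antisymm hu (Nat.zero_le _))
    subst this
    exact ⟨[], [], [], by simp, by simp⟩
  | succ N ih =>
    intro u hu hle
    by_cases hmem : i ∈ u
    · obtain ⟨u₁, u₂, rfl⟩ := List.append_of_mem hmem
      have hlen : u₂.length ≤ N := by
        have h5 : (u₁ ++ i :: u₂).length = u₁.length + u₂.length + 1 := by simp; omega
        omega
      obtain ⟨p', u', q', heq, hlt⟩ := ih u₂ hlen
        (fun k hk => hle k (List.mem_append.mpr (Or.inr (List.mem_cons_of_mem _ hk))))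
      refine ⟨[i] ++ u₁ ++ p', u', q', ?_, hlt⟩
      have : [i] ++ (u₁ ++ i :: u₂) ++ [i] = ([i] ++ u₁) ++ ([i] ++ u₂ ++ [i]) := by simp
      rw [this, heq]
      simp
    · refine ⟨[], u, [], by simp, ?_⟩
      intro k hk
      exact lt_of_le_of_ne (hle k hk) (fun e => hmem (by rw [e]; exact hk))

lemma phiL_cons_append {n : ℕ} (i : Fin n) (X : List (Fin n)) :
    phiL n (i :: X) = gen i * phiL n X := phiL_cons i X

/-- one reduction step: a non-canonical word is `phiL`-equal to a strictly shorter word. -/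
lemma reduce_step {n : ℕ} {w : List (Fin n)} (h : ¬ Canonical w) :
    ∃ w₂ : List (Fin n), w₂.length < w.length ∧ phiL n w₂ = phiL n w := by
  unfold Canonical at h
  push_neg at h
  obtain ⟨p, u, q, i, hw, hnot⟩ := h
  by_cases hbig : ∃ j ∈ u, i < j
  · -- all letters of u are ≥ i
    have hge : ∀ k ∈ u, i ≤ k := hnot hbig
    obtain ⟨p', u', q', heq, hgt⟩ := refine_high i u.length u le_rfl hge
    have hw2 : w = p ++ (p' ++ ([i] ++ u' ++ [i]) ++ q') ++ q := by
      rw [hw]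
      have h6 : p ++ [i] ++ u ++ [i] ++ q = p ++ ([i] ++ u ++ [i]) ++ q := by simp
      rw [h6, heq]
      simp
    refine ⟨p ++ p' ++ (u' ++ [i]) ++ q' ++ q, ?_, ?_⟩
    · have h1 := congrArg List.length hw2
      simp only [List.length_append, List.length_cons, List.length_nil] at h1 ⊢
      omega
    · rw [hw2]
      have key : ∀ X : K n, gen i * (phiL n u' * (gen i * X)) = phiL n u' * (gen i * X) := by
        intro X
        have h0 := absorb_left i u' hgt
        rw [phiL_append, phiL_singleton] at h0
        have h1 := congrArg (· * X) h0
        simpa [mul_assoc] using h1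
      simp only [phiL_append, phiL_singleton, mul_assoc]
      rw [key]
  · -- all letters of u are ≤ i
    have hle : ∀ k ∈ u, k ≤ i := by
      intro k hk
      by_contra hlt
      push_neg at hlt
      exact hbig ⟨k, hk, hlt⟩
    obtain ⟨p', u', q', heq, hlt⟩ := refine_low i u.length u le_rfl hle
    have hw2 : w = p ++ (p' ++ ([i] ++ u' ++ [i]) ++ q') ++ q := by
      rw [hw]
      have h6 : p ++ [i] ++ u ++ [i] ++ q = p ++ ([i] ++ u ++ [i]) ++ q := by simp
      rw [h6, heq]
      simp
    refine ⟨p ++ p' ++ ([i] ++ u') ++ q' ++ q, ?_, ?_⟩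
    · have h1 := congrArg List.length hw2
      simp only [List.length_append, List.length_cons, List.length_nil] at h1 ⊢
      omega
    · rw [hw2]
      have key : ∀ X : K n, gen i * (phiL n u' * (gen i * X)) = gen i * (phiL n u' * X) := by
        intro X
        have h0 := absorb_right i u' hlt
        have h1 := congrArg (· * X) h0
        simpa [mul_assoc] using h1
      simp only [phiL_append, phiL_singleton, mul_assoc]
      rw [key]

/-- canonical Good words are the descending word. -/
lemma good_canonical {n : ℕ} {w : List (Fin n)} (hC : Canonical w) (hG : GoodW n w) :
    phiL n w = fEl n := by
  have hw : w = descL n 0 n := by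
    apply lemmaC w n le_rfl
    · intro l _
      exact ⟨Nat.zero_le _, l.isLt⟩
    · exact hC
    · intro v hpin k _
      rw [hG v hpin.1]
  rw [hw, fEl_eq_descL]

/-- main induction: Good words represent `f`. -/
lemma good_imp_fEl {n : ℕ} : ∀ (N : ℕ) (w : List (Fin n)), w.length ≤ N →
    GoodW n w → phiL n w = fEl n := by
  intro N
  induction N with
  | zero =>
    intro w hw hG
    have : w = [] := List.length_eq_zero_iff.mp (le_antisymm hw (Nat.zero_le _))
    subst this
    refine good_canonical (fun p u q i h => ?_) hG
    have hlen := congrArg List.length h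
    simp only [List.length_nil, List.length_append, List.length_cons] at hlen
    omega
  | succ N ih =>
    intro w hw hG
    by_cases hC : Canonical w
    · exact good_canonical hC hG
    · obtain ⟨w₂, hlen, heq⟩ := reduce_step hC
      have hG2 : GoodW n w₂ := by
        intro v hv
        rw [show actW w₂ = actW w from actW_of_phiL_eq heq]
        exact hG v hv
      rw [← heq]
      exact ih w₂ (by omega) hG2

end Aux

/-- Zero Cancellation Theorem, part (ii): if `x` lies in the submonoid generated by
`a_1, …, a_{n-1}` and `x * y = f`, then `y = f`. -/
theorem zero_cancellation_ii (n : ℕ) (hn : 1 ≤ n) (x y : K n)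
    (hx : x ∈ lower n) (hxy : x * y = fEl n) : y = fEl n := by
  -- express x as a word avoiding the top letter
  have hx' : ∃ u : List (Fin n), (∀ i ∈ u, i.val + 1 ≠ n) ∧ phiL n u = x := by
    refine Submonoid.closure_induction ?_ ?_ ?_ hx
    · rintro g ⟨i, hi, rfl⟩
      exact ⟨[i], by simpa using hi, phiL_singleton i⟩
    · exact ⟨[], by simp, rfl⟩
    · rintro a b _ _ ⟨u₁, h₁, hu₁⟩ ⟨u₂, h₂, hu₂⟩
      refine ⟨u₁ ++ u₂, ?_, by rw [phiL_append, hu₁, hu₂]⟩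
      intro i hi
      rcases List.mem_append.mp hi with h | h
      · exact h₁ i h
      · exact h₂ i h
  obtain ⟨u, hu, hux⟩ := hx'
  -- express y as a word
  obtain ⟨W, hW⟩ := Con.mk'_surjective (c := conGen (Rel n)) y
  have hyw : phiL n (FreeMonoid.toList W) = y := by
    show phi n (FreeMonoid.ofList (FreeMonoid.toList W)) = y
    rw [FreeMonoid.ofList_toList]
    exact hW
  set w := FreeMonoid.toList W with hwdef
  have htot : phiL n (u ++ w) = fEl n := by
    rw [phiL_append, hux, hyw]
    exact hxy
  have hact : actW (u ++ w) = actW (descL n 0 n) :=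
    actW_of_phiL_eq (by rw [htot, fEl_eq_descL])
  have hGuw : GoodW n (u ++ w) := by
    intro v hv
    rw [hact]
    exact goodW_descL n v hv
  have hGw : GoodW n w := goodW_extract hu hGuw
  have hfin : phiL n w = fEl n := good_imp_fEl w.length w le_rfl hGw
  rw [← hyw, hfin]

end Kiselman
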